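/- Let $(S_n)_{n\ge 1}$ be a standard Gaussian random walk started at $x \ge 0$. For every $\kappa > 0$ there exists a constant $c(\kappa) > 0$, independent of $x$, such that $\mathbb{E}_x\Big[\sum_{l \ge 0} e^{-\kappa S_l} \mathbf{1}\{\min_{j \le l} S_j \ge 0\}\Big] \le c(\kappa)$. -/

import Mathlib

/-!
Let `K ψ (s) = E[ψ(s + Y); s + Y ≥ 0]`, `Y ~ N(0, 1)`, be the transition operator of the walk
killed on leaving `[0, ∞)`. By the Markov property the expectation is `∑ₗ Kˡ f (x)` with
`f(s) = e^{-κ s}`, and this sum is at most `h(x)` for any `h` with the drift inequality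
`f + K h ≤ h` on `[0, ∞)`. Take `h = A - B f`. Since `K h (x) = A P(x + Y ≥ 0) - B f(x) ρ(x)` with
`ρ(x) = E[e^{-κY}; Y ≥ -x]`, the drift inequality reads `f(x) (1 + B - B ρ(x)) ≤ A P(x + Y < 0)`.
As `ρ` increases to `E[e^{-κY}] = e^{κ²/2} > 1`, there are `x₀` and `B` with `B (ρ(x₀) - 1) = 1`;
then the left side is `≤ 0` for `x ≥ x₀`, and for `x < x₀` it is at most
`1 + B = A P(x₀ + Y < 0) ≤ A P(x + Y < 0)`.
-/

open MeasureTheory ProbabilityTheory Real Finset Filter Topology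

open scoped ENNReal

theorem ProbabilityTheory.IndepFun.lintegral_comp_prodMk {Ω β γ : Type*} [MeasurableSpace Ω]
    [MeasurableSpace β] [MeasurableSpace γ] {P : Measure Ω} [IsFiniteMeasure P] {U : Ω → β}
    {Y : Ω → γ} (hUY : IndepFun U Y P) (hU : Measurable U) (hY : Measurable Y)
    {Φ : β × γ → ℝ≥0∞} (hΦ : Measurable Φ) :
    ∫⁻ ω, Φ (U ω, Y ω) ∂P = ∫⁻ ω, ∫⁻ y, Φ (U ω, y) ∂(P.map Y) ∂P := by
  rw [← lintegral_map hΦ (hU.prodMk hY),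
    hUY.map_prod_eq_prod_map_map hU.aemeasurable hY.aemeasurable,
    lintegral_prod _ hΦ.aemeasurable, lintegral_map hΦ.lintegral_prod_right' hU]

theorem ProbabilityTheory.iIndepFun.indepFun_of_measurable_iSup {Ω ι β γ : Type*}
    {mΩ : MeasurableSpace Ω} [MeasurableSpace β] [mγ : MeasurableSpace γ] {P : Measure Ω}
    {f : ι → Ω → γ} (hf : iIndepFun f P) (hmeas : ∀ i, Measurable (f i)) {S : Set ι} {k : ι}
    (hk : k ∉ S) {U : Ω → β} (hU : Measurable[⨆ i ∈ S, mγ.comap (f i)] U) :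
    IndepFun U (f k) P := by
  have h := indep_iSup_of_disjoint (fun i => (hmeas i).comap_le) hf.iIndep
    (Set.disjoint_singleton_right.2 hk)
  rw [_root_.iSup_singleton] at h
  exact (IndepFun_iff_Indep _ _ _).2 (indep_of_indep_of_le_left h hU.comap_le)

namespace KilledWalk

noncomputable def killedStep (μ : Measure ℝ) (ψ : ℝ → ℝ≥0∞) (s : ℝ) : ℝ≥0∞ :=
  ∫⁻ y, (Set.Ici 0).indicator ψ (s + y) ∂μ

section KilledStep

variable {μ : Measure ℝ} {ψ : ℝ → ℝ≥0∞}

lemma measurable_killedStep [SFinite μ] (hψ : Measurable ψ) : Measurable (killedStep μ ψ) :=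
  Measurable.lintegral_prod_right' ((hψ.indicator measurableSet_Ici).comp measurable_add)

lemma killedStep_mono {φ : ℝ → ℝ≥0∞} (h : ∀ s, 0 ≤ s → ψ s ≤ φ s) (x : ℝ) :
    killedStep μ ψ x ≤ killedStep μ φ x :=
  lintegral_mono fun _ => Set.indicator_le_indicator' (h _)

lemma killedStep_finset_sum {ι : Type*} (t : Finset ι) {ψ : ι → ℝ → ℝ≥0∞}
    (hψ : ∀ i ∈ t, Measurable (ψ i)) (x : ℝ) :
    killedStep μ (∑ i ∈ t, ψ i) x = ∑ i ∈ t, killedStep μ (ψ i) x := by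
  simp only [killedStep, Finset.indicator_sum, Finset.sum_apply]
  exact lintegral_finsetSum _ fun i hi =>
    ((hψ i hi).indicator measurableSet_Ici).comp (measurable_const_add x)

lemma killedStep_ofReal {g : ℝ → ℝ} (hg : ∀ s, 0 ≤ s → 0 ≤ g s) {x : ℝ}
    (hint : IntegrableOn (fun y => g (x + y)) (Set.Ici (-x)) μ) :
    killedStep μ (fun s => ENNReal.ofReal (g s)) x
      = ENNReal.ofReal (∫ y in Set.Ici (-x), g (x + y) ∂μ) := by
  have hshift : ∀ y, (Set.Ici 0).indicator (fun s => ENNReal.ofReal (g s)) (x + y)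
      = (Set.Ici (-x)).indicator (fun y => ENNReal.ofReal (g (x + y))) y := fun y => by
    by_cases hy : 0 ≤ x + y <;> simp [hy, neg_le_iff_add_nonneg']
  rw [killedStep, lintegral_congr hshift, lintegral_indicator measurableSet_Ici,
    ofReal_integral_eq_lintegral_ofReal hint]
  exact ae_restrict_of_forall_mem measurableSet_Ici fun y hy =>
    hg _ (neg_le_iff_add_nonneg'.mp hy)

theorem tsum_killedStep_iterate_le_of_drift [SFinite μ] {f h : ℝ → ℝ≥0∞} (hf : Measurable f)
    (hdrift : ∀ s, 0 ≤ s → f s + killedStep μ h s ≤ h s) {x : ℝ} (hx : 0 ≤ x) :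
    ∑' l, (killedStep μ)^[l] f x ≤ h x := by
  have hmeas (l : ℕ) : Measurable ((killedStep μ)^[l] f) := by
    induction l with
    | zero => exact hf
    | succ l ih => rw [Function.iterate_succ_apply']; exact measurable_killedStep ih
  refine ENNReal.tsum_le_of_sum_range_le fun n => ?_
  induction n generalizing x with
  | zero => simp
  | succ n ih =>
    calc ∑ l ∈ range (n + 1), (killedStep μ)^[l] f x
        = f x + killedStep μ (∑ l ∈ range n, (killedStep μ)^[l] f) x := by
          simp only [sum_range_succ', Function.iterate_succ_apply', killedStep_finset_sum _
            (fun l _ => hmeas l), Function.iterate_zero_apply, add_comm]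
      _ ≤ f x + killedStep μ h x :=
          add_le_add le_rfl (killedStep_mono (fun s hs => by simpa using ih hs) x)
      _ ≤ h x := hdrift x hx

end KilledStep

section Walk

variable {Ω : Type*} (x : ℝ) (X : ℕ → Ω → ℝ)

def walk (l : ℕ) (ω : Ω) : ℝ := x + ∑ i ∈ range l, X i ω

def survivalSet (l : ℕ) : Set Ω := {ω | ∀ j ≤ l, 0 ≤ walk x X j ω}

variable {x X}

lemma walk_succ (l : ℕ) (ω : Ω) : walk x X (l + 1) ω = walk x X l ω + X l ω := by
  simp only [walk, sum_range_succ, add_assoc]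

lemma survivalSet_succ (l : ℕ) :
    survivalSet x X (l + 1) = survivalSet x X l ∩ {ω | 0 ≤ walk x X (l + 1) ω} := by
  ext ω
  simp only [survivalSet, Set.mem_inter_iff, Nat.le_succ_iff]
  grind

lemma survivalSet_zero (hx : 0 ≤ x) : survivalSet x X 0 = Set.univ := by
  ext ω
  simpa [survivalSet, walk] using hx

variable {mΩ : MeasurableSpace Ω} {l : ℕ}

lemma measurable_walk (hX : ∀ i < l, Measurable (X i)) : Measurable (walk x X l) :=
  measurable_const.add (Finset.measurable_sum _ fun i hi => hX i (mem_range.1 hi))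

lemma measurableSet_survivalSet (hX : ∀ i < l, Measurable (X i)) :
    MeasurableSet (survivalSet x X l) := by
  simp only [survivalSet, Set.ofPred_forall]
  exact .iInter fun j => .iInter fun hj => measurableSet_le measurable_const
    (measurable_walk fun i hi => hX i (hi.trans_le hj))

variable {P : Measure Ω} {μ : Measure ℝ}

lemma indepFun_walk_survivalSet (hX : ∀ i, Measurable (X i)) (hind : iIndepFun X P) :
    IndepFun (fun ω => (walk x X l ω, (survivalSet x X l).indicator (1 : Ω → ℝ≥0∞) ω))
      (X l) P := by
  refine hind.indepFun_of_measurable_iSup hX (S := Set.Iio l) (lt_irrefl l) ?_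
  have hX_past (i : ℕ) (hi : i < l) :
      Measurable[⨆ i ∈ Set.Iio l, MeasurableSpace.comap (X i) Real.measurableSpace] (X i) :=
    Measurable.of_comap_le (le_iSup₂
      (f := fun i (_ : i ∈ Set.Iio l) => MeasurableSpace.comap (X i) Real.measurableSpace) i hi)
  exact (measurable_walk hX_past).prodMk
    ((measurable_const (a := (1 : ℝ≥0∞))).indicator (measurableSet_survivalSet hX_past))

theorem lintegral_survivalSet_succ (hX : ∀ i, Measurable (X i)) (hind : iIndepFun X P)
    (hlaw : P.map (X l) = μ) {ψ : ℝ → ℝ≥0∞} (hψ : Measurable ψ) :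
    ∫⁻ ω, (survivalSet x X (l + 1)).indicator (fun ω => ψ (walk x X (l + 1) ω)) ω ∂P
      = ∫⁻ ω, (survivalSet x X l).indicator (fun ω => killedStep μ ψ (walk x X l ω)) ω ∂P := by
  have := hind.isProbabilityMeasure
  let U : Ω → ℝ × ℝ≥0∞ := fun ω => (walk x X l ω, (survivalSet x X l).indicator 1 ω)
  have hU : Measurable U := (measurable_walk fun i _ => hX i).prodMk
    (measurable_one.indicator (measurableSet_survivalSet fun i _ => hX i))
  let Φ : (ℝ × ℝ≥0∞) × ℝ → ℝ≥0∞ := fun p => p.1.2 * (Set.Ici 0).indicator ψ (p.1.1 + p.2)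
  have hΦ : Measurable Φ := measurable_fst.snd.mul
    ((hψ.indicator measurableSet_Ici).comp (measurable_fst.fst.add measurable_snd))
  calc _ = ∫⁻ ω, Φ (U ω, X l ω) ∂P := by
        classical
        refine lintegral_congr fun ω => ?_
        by_cases hω : ω ∈ survivalSet x X l <;>
          simp [Φ, U, hω, survivalSet_succ, walk_succ, Set.indicator_apply]
    _ = ∫⁻ ω, ∫⁻ y, Φ (U ω, y) ∂μ ∂P := by
        rw [(indepFun_walk_survivalSet hX hind).lintegral_comp_prodMk hU (hX l) hΦ, hlaw]
    _ = _ := by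
        refine lintegral_congr fun ω => ?_
        by_cases hω : ω ∈ survivalSet x X l <;> simp [Φ, U, hω, killedStep]

theorem lintegral_survivalSet_eq_killedStep_iterate (hX : ∀ i, Measurable (X i))
    (hind : iIndepFun X P) (hlaw : ∀ i, P.map (X i) = μ) (hx : 0 ≤ x) (l : ℕ)
    {ψ : ℝ → ℝ≥0∞} (hψ : Measurable ψ) :
    ∫⁻ ω, (survivalSet x X l).indicator (fun ω => ψ (walk x X l ω)) ω ∂P
      = (killedStep μ)^[l] ψ x := by
  have := hind.isProbabilityMeasure
  have : IsProbabilityMeasure μ := hlaw 0 ▸ Measure.isProbabilityMeasure_map (hX 0).aemeasurable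
  induction l generalizing ψ with
  | zero => simp [survivalSet_zero hx, walk]
  | succ l ih =>
    rw [lintegral_survivalSet_succ hX hind (hlaw l) hψ, ih (measurable_killedStep hψ),
      Function.iterate_succ_apply]

end Walk

noncomputable def truncMgf (t x : ℝ) : ℝ := ∫ y in Set.Ici (-x), exp (t * y) ∂gaussianReal 0 1

noncomputable def killingProb (x : ℝ) : ℝ := (gaussianReal 0 1).real (Set.Iio (-x))

lemma truncMgf_nonneg (t x : ℝ) : 0 ≤ truncMgf t x :=
  setIntegral_nonneg measurableSet_Ici fun _ _ => (exp_pos _).le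

lemma truncMgf_mono (t : ℝ) : Monotone (truncMgf t) := fun _ _ h =>
  setIntegral_mono_set (integrable_exp_mul_gaussianReal t).integrableOn
    (ae_of_all _ fun _ => (exp_pos _).le)
    (Set.Ici_subset_Ici.2 (neg_le_neg h)).eventuallyLE

lemma exists_one_lt_truncMgf {t : ℝ} (ht : t ≠ 0) : ∃ x, 1 < truncMgf t x := by
  have hlim : Tendsto (truncMgf t) atTop (𝓝 (exp (t ^ 2 / 2))) := by
    have hunion : ⋃ x : ℝ, Set.Ici (-x) = Set.univ :=
      Set.eq_univ_of_forall fun y => Set.mem_iUnion.2 ⟨-y, by simp⟩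
    have h := tendsto_setIntegral_of_monotone (fun _ => measurableSet_Ici)
      (fun _ _ h => Set.Ici_subset_Ici.2 (neg_le_neg h))
      (integrable_exp_mul_gaussianReal (μ := 0) (v := 1) t).integrableOn
    have hmgf : ∫ y, exp (t * y) ∂gaussianReal 0 1 = exp (t ^ 2 / 2) := by
      simpa [mgf] using congrFun (mgf_id_gaussianReal (μ := 0) (v := 1)) t
    rwa [hunion, setIntegral_univ, hmgf] at h
  exact (hlim.eventually_const_lt (one_lt_exp_iff.2 (by positivity))).exists

lemma killingProb_pos (x : ℝ) : 0 < killingProb x := by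
  refine ENNReal.toReal_pos (fun h => ?_) (measure_ne_top _ _)
  have := gaussianReal_absolutelyContinuous' 0 one_ne_zero h
  simp at this

lemma killingProb_le_one (x : ℝ) : killingProb x ≤ 1 := measureReal_le_one

lemma killingProb_anti : Antitone killingProb := fun x x' h =>
  measureReal_mono (Set.Iio_subset_Iio (neg_le_neg h))

lemma setIntegral_sub_mul_exp_gaussianReal (A B t x : ℝ) :
    ∫ y in Set.Ici (-x), (A - B * exp (t * (x + y))) ∂gaussianReal 0 1
      = A * (1 - killingProb x) - B * exp (t * x) * truncMgf t x := by
  have hint := (integrable_exp_mul_gaussianReal (μ := 0) (v := 1) t).integrableOn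
    (s := Set.Ici (-x))
  have hsurv : (gaussianReal 0 1).real (Set.Ici (-x)) = 1 - killingProb x := by
    rw [← Set.compl_Iio, probReal_compl_eq_one_sub measurableSet_Iio, killingProb]
  simp_rw [mul_add, exp_add, ← mul_assoc]
  rw [integral_sub (integrable_const A) (hint.const_mul _), setIntegral_const, integral_const_mul,
    hsurv, truncMgf, smul_eq_mul, mul_comm]

lemma drift_le_killingProb {t A B x₀ x : ℝ} (ht : t ≤ 0) (hx : 0 ≤ x) (hA : 0 ≤ A) (hB : 0 ≤ B)
    (hBx₀ : B * (truncMgf t x₀ - 1) = 1) (hAx₀ : A * killingProb x₀ = 1 + B) :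
    exp (t * x) * (1 + B - B * truncMgf t x) ≤ A * killingProb x := by
  have he : exp (t * x) ≤ 1 := exp_le_one_iff.2 (mul_nonpos_of_nonpos_of_nonneg ht hx)
  rcases le_or_gt x₀ x with hx₀ | hx₀
  · have hρ : 1 + B - B * truncMgf t x ≤ 0 := by
      nlinarith [mul_le_mul_of_nonneg_left (truncMgf_mono t hx₀) hB]
    nlinarith [exp_pos (t * x), mul_nonneg hA (killingProb_pos x).le]
  · calc exp (t * x) * (1 + B - B * truncMgf t x) ≤ 1 + B := by
          nlinarith [exp_pos (t * x), mul_nonneg hB (truncMgf_nonneg t x)]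
      _ = A * killingProb x₀ := hAx₀.symm
      _ ≤ A * killingProb x := mul_le_mul_of_nonneg_left (killingProb_anti hx₀.le) hA

theorem exists_lyapunov_gaussianReal {t : ℝ} (ht : t < 0) :
    ∃ A > 0, ∃ h : ℝ → ℝ≥0∞, (∀ s, h s ≤ ENNReal.ofReal A) ∧
      ∀ s, 0 ≤ s → ENNReal.ofReal (exp (t * s)) + killedStep (gaussianReal 0 1) h s ≤ h s := by
  obtain ⟨x₀, hx₀⟩ := exists_one_lt_truncMgf ht.ne
  set B := (truncMgf t x₀ - 1)⁻¹
  set A := (1 + B) / killingProb x₀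
  have hB : 0 < B := inv_pos.2 (sub_pos.2 hx₀)
  have hBA : B ≤ A := le_trans (by linarith)
    (le_div_self (by positivity) (killingProb_pos x₀) (killingProb_le_one x₀))
  have hg (s : ℝ) (hs : 0 ≤ s) : 0 ≤ A - B * exp (t * s) := by
    nlinarith [exp_le_one_iff.2 (mul_nonpos_of_nonpos_of_nonneg ht.le hs), exp_pos (t * s)]
  refine ⟨A, hB.trans_le hBA, fun s => ENNReal.ofReal (A - B * exp (t * s)),
    fun s => ENNReal.ofReal_le_ofReal (sub_le_self _ (by positivity)), fun x hx => ?_⟩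
  have hint : IntegrableOn (fun y => A - B * exp (t * (x + y))) (Set.Ici (-x))
      (gaussianReal 0 1) := by
    simp_rw [mul_add, exp_add, ← mul_assoc]
    exact (integrable_const A).sub ((integrable_exp_mul_gaussianReal t).const_mul _) |>.integrableOn
  have hK_nonneg : 0 ≤ ∫ y in Set.Ici (-x), (A - B * exp (t * (x + y))) ∂gaussianReal 0 1 :=
    setIntegral_nonneg measurableSet_Ici fun y hy => hg _ (neg_le_iff_add_nonneg'.mp hy)
  rw [killedStep_ofReal hg hint, ← ENNReal.ofReal_add (exp_pos _).le hK_nonneg,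
    setIntegral_sub_mul_exp_gaussianReal]
  refine ENNReal.ofReal_le_ofReal ?_
  have := drift_le_killingProb ht.le hx (hB.le.trans hBA) hB.le
    (inv_mul_cancel₀ (sub_pos.2 hx₀).ne') (div_mul_cancel₀ _ (killingProb_pos x₀).ne')
  linarith

end KilledWalk

open KilledWalk in
theorem gaussian_walk_exp_sum_bound_general
    {Ω : Type*} [MeasureSpace Ω]
    (X : ℕ → Ω → ℝ)
    (hmeas : ∀ i, Measurable (X i))
    (hindep : iIndepFun X ℙ)
    (hlaw : ∀ i, Measure.map (X i) ℙ = gaussianReal 0 1)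
    (κ : ℝ) (hκ : 0 < κ) :
    ∃ c : ℝ, 0 < c ∧ ∀ x : ℝ, 0 ≤ x →
      (∫⁻ ω, ∑' l : ℕ,
          ENNReal.ofReal
            ({ω' | ∀ j ≤ l, 0 ≤ x + ∑ i ∈ Finset.range j, X i ω'}.indicator
              (fun ω' => Real.exp (-(κ * (x + ∑ i ∈ Finset.range l, X i ω')))) ω) ∂ℙ)
        ≤ ENNReal.ofReal c := by
  obtain ⟨A, hA, h, hhA, hdrift⟩ := exists_lyapunov_gaussianReal (neg_neg_of_pos hκ)
  refine ⟨A, hA, fun x hx => ?_⟩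
  have hf : Measurable fun s => ENNReal.ofReal (exp (-κ * s)) := by fun_prop
  have hterm (l : ℕ) (ω : Ω) : ENNReal.ofReal ((survivalSet x X l).indicator
      (fun ω => exp (-(κ * walk x X l ω))) ω)
      = (survivalSet x X l).indicator (fun ω => ENNReal.ofReal (exp (-κ * walk x X l ω))) ω := by
    simp only [neg_mul]
    exact (congrFun (Set.indicator_comp_of_zero ENNReal.ofReal_zero) ω).symm
  calc _ = ∫⁻ ω, ∑' l, (survivalSet x X l).indicator
          (fun ω => ENNReal.ofReal (exp (-κ * walk x X l ω))) ω :=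
        lintegral_congr fun ω => tsum_congr fun l => hterm l ω
    _ = ∑' l, ∫⁻ ω, (survivalSet x X l).indicator
          (fun ω => ENNReal.ofReal (exp (-κ * walk x X l ω))) ω :=
        lintegral_tsum fun l => ((hf.comp (measurable_walk fun i _ => hmeas i)).indicator
          (measurableSet_survivalSet fun i _ => hmeas i)).aemeasurable
    _ = ∑' l, (killedStep (gaussianReal 0 1))^[l] (fun s => ENNReal.ofReal (exp (-κ * s))) x :=
        tsum_congr fun l => lintegral_survivalSet_eq_killedStep_iterate hmeas hindep hlaw hx l hf
    _ ≤ h x := tsum_killedStep_iterate_le_of_drift hf hdrift hx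
    _ ≤ ENNReal.ofReal A := hhA x

/-- For a standard Gaussian random walk started at `x ≥ 0`, for every `κ > 0` there is a
constant `c(κ)` independent of `x` bounding `E_x[∑_{l ≥ 0} e^{-κ S_l} 1{min_{j≤l} S_j ≥ 0}]`. -/
theorem gaussian_walk_exp_sum_bound
    {Ω : Type*} [MeasureSpace Ω] [IsProbabilityMeasure (ℙ : Measure Ω)]
    (X : ℕ → Ω → ℝ)
    (hmeas : ∀ i, Measurable (X i))
    (hindep : iIndepFun X ℙ)
    (hlaw : ∀ i, Measure.map (X i) ℙ = gaussianReal 0 1)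
    (κ : ℝ) (hκ : 0 < κ) :
    ∃ c : ℝ, 0 < c ∧ ∀ x : ℝ, 0 ≤ x →
      (∫⁻ ω, ∑' l : ℕ,
          ENNReal.ofReal
            ({ω' | ∀ j ≤ l, 0 ≤ x + ∑ i ∈ Finset.range j, X i ω'}.indicator
              (fun ω' => Real.exp (-(κ * (x + ∑ i ∈ Finset.range l, X i ω')))) ω) ∂ℙ)
        ≤ ENNReal.ofReal c :=
  gaussian_walk_exp_sum_bound_general X hmeas hindep hlaw κ hκ
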